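/- Let f : ℝ^d → ℝ be ρ-weakly convex and continuous, with ρ, η, β > 0. Suppose that for each x ∈ ℝ^d there is a continuous η-weakly convex model f_x : ℝ^d → ℝ with |f(y) − f_x(y)| ≤ (β/2)‖y − x‖² for all y. Let τ > max{η, 2ρ, (4β + ρ + η)/2}, set ρ̂ = τ/2 + (ρ + η)/4, and fix α ∈ (0, 1]. For a point x ∈ ℝ^d, let y be the unique minimizer of z ↦ f_x(z) + (τ/2)‖z − x‖², set x⁺ = (1 − α)x + αy, and let x̂ be the unique minimizer of z ↦ f(z) + (ρ̂/2)‖z − x‖². Then, with F(u) := min_z { f(z) + (ρ̂/2)‖z − u‖² } denoting the Moreau envelope, the sufficient decrease inequality holds: F(x⁺) ≤ F(x) − (ρ̂(τ − ρ̂ − β)/(2α(ρ̂ + τ − ρ − η)))‖x⁺ − x‖² − (α(2ρ̂ − ρ − η − β)/(2ρ̂(ρ̂ + τ − ρ − η)))‖ρ̂(x − x̂)‖². -/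

import Mathlib

/-!
Both subproblems are strongly convex, with moduli `τ - η` and `ρ̂ - ρ`, so their minimizers `y`
and `x̂` grow quadratically away from them. Evaluating each growth inequality at the other
minimizer and passing between `f` and its model with the `β`-approximation bound gives a lower
bound on `⟪y - x, x̂ - x⟫` by `‖y - x‖²` and `‖x̂ - x‖²`. Testing the envelope at `x⁺` with the
point `x̂` costs `-ρ̂ α ⟪y - x, x̂ - x⟫` plus a quadratic term, and that lower bound turns this
into the stated decrease.
-/

open Set Filter Topology

variable {E : Type*} [NormedAddCommGroup E] [InnerProductSpace ℝ E] {s : Set E} {m : ℝ} {f : E → ℝ}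

lemma strongConvexOn_neg_iff_convexOn_add :
    StrongConvexOn s (-m) f ↔ ConvexOn ℝ s fun z ↦ f z + m / 2 * ‖z‖ ^ 2 := by
  simp only [strongConvexOn_iff_convex, neg_div, neg_mul, sub_neg_eq_add]

lemma StrongConvexOn.add_sq_norm_sub (hf : StrongConvexOn s m f) (c : ℝ) (x : E) :
    StrongConvexOn s (m + c) fun z ↦ f z + c / 2 * ‖z - x‖ ^ 2 := by
  rw [strongConvexOn_iff_convex] at hf ⊢
  have haff : ConvexOn ℝ s fun z ↦ c / 2 * ‖x‖ ^ 2 + ((-c) • innerₛₗ ℝ x) z :=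
    (convexOn_const _ hf.1).add (((-c) • innerₛₗ ℝ x).convexOn hf.1)
  refine (hf.add haff).congr fun z _ ↦ ?_
  simp only [Pi.add_apply, LinearMap.smul_apply, innerₛₗ_apply_apply, smul_eq_mul,
    norm_sub_sq_real, real_inner_comm x z]
  ring

lemma StrongConvexOn.add_sq_norm_sub_le_of_isMinOn {w z : E} (hf : StrongConvexOn s m f)
    (hw : IsMinOn f s w) (hws : w ∈ s) (hzs : z ∈ s) :
    f w + m / 2 * ‖z - w‖ ^ 2 ≤ f z := by
  have hseg : ∀ t ∈ Ioo (0 : ℝ) 1, f w + (1 - t) * (m / 2 * ‖z - w‖ ^ 2) ≤ f z := by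
    rintro t ⟨ht0, ht1⟩
    have hconv := hf.2 hws hzs (sub_nonneg.2 ht1.le) ht0.le (sub_add_cancel 1 t)
    have hmin := isMinOn_iff.1 hw _
      (hf.1 hws hzs (sub_nonneg.2 ht1.le) ht0.le (sub_add_cancel 1 t))
    rw [norm_sub_rev, smul_eq_mul, smul_eq_mul] at hconv
    exact le_of_mul_le_mul_left (by linear_combination hmin + hconv) ht0
  have hlim : Tendsto (fun t : ℝ ↦ f w + (1 - t) * (m / 2 * ‖z - w‖ ^ 2)) (𝓝[>] 0)
      (𝓝 (f w + (1 - 0) * (m / 2 * ‖z - w‖ ^ 2))) :=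
    (Continuous.tendsto (by fun_prop) 0).mono_left nhdsWithin_le_nhds
  simpa using le_of_tendsto hlim (eventually_of_mem (Ioo_mem_nhdsGT one_pos) hseg)

lemma le_two_mul_inner_of_isMinOn_model_of_isMinOn_prox {g : E → ℝ} {ρ η β τ r : ℝ} {x y p : E}
    (hf : StrongConvexOn univ (-ρ) f) (hg : StrongConvexOn univ (-η) g)
    (happrox : ∀ z, |f z - g z| ≤ β / 2 * ‖z - x‖ ^ 2)
    (hy : IsMinOn (fun z ↦ g z + τ / 2 * ‖z - x‖ ^ 2) univ y)
    (hp : IsMinOn (fun z ↦ f z + r / 2 * ‖z - x‖ ^ 2) univ p) :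
    (2 * τ - ρ - η - β) * ‖y - x‖ ^ 2 + (2 * r - ρ - η - β) * ‖p - x‖ ^ 2
      ≤ 2 * (r + τ - ρ - η) * inner ℝ (y - x) (p - x) := by
  have hgy := (hg.add_sq_norm_sub τ x).add_sq_norm_sub_le_of_isMinOn hy (mem_univ y) (mem_univ p)
  have hfp := (hf.add_sq_norm_sub r x).add_sq_norm_sub_le_of_isMinOn hp (mem_univ p) (mem_univ y)
  have hp_approx := abs_le.1 (happrox p)
  have hy_approx := abs_le.1 (happrox y)
  have hpy : ‖p - y‖ ^ 2 = ‖p - x‖ ^ 2 - 2 * inner ℝ (y - x) (p - x) + ‖y - x‖ ^ 2 := by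
    rw [← sub_sub_sub_cancel_right p y x, norm_sub_sq_real, real_inner_comm]
  rw [norm_sub_rev y p, hpy] at hfp
  rw [hpy] at hgy
  linear_combination 2 * (hgy + hfp + hp_approx.1 + hy_approx.2)

theorem model_based_sufficient_decrease_general {d : ℕ}
    (f : EuclideanSpace ℝ (Fin d) → ℝ)
    (ρ η β : ℝ) (hρ : 0 < ρ) (hη : 0 < η)
    (hfwc : ConvexOn ℝ Set.univ (fun z => f z + ρ / 2 * ‖z‖ ^ 2))
    (model : EuclideanSpace ℝ (Fin d) → EuclideanSpace ℝ (Fin d) → ℝ)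
    (hmwc : ∀ x, ConvexOn ℝ Set.univ (fun z => model x z + η / 2 * ‖z‖ ^ 2))
    (happrox : ∀ x y, |f y - model x y| ≤ β / 2 * ‖y - x‖ ^ 2)
    (τ : ℝ) (hτ : τ > max η (max (2 * ρ) ((4 * β + ρ + η) / 2)))
    (rh : ℝ) (hrh : rh = τ / 2 + (ρ + η) / 4)
    (α : ℝ) (hα : α ∈ Set.Ioc (0 : ℝ) 1)
    (P : EuclideanSpace ℝ (Fin d) → EuclideanSpace ℝ (Fin d))
    (hP : ∀ u z, f (P u) + rh / 2 * ‖P u - u‖ ^ 2 ≤ f z + rh / 2 * ‖z - u‖ ^ 2)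
    (x y : EuclideanSpace ℝ (Fin d))
    (hy : ∀ z, model x y + τ / 2 * ‖y - x‖ ^ 2 ≤ model x z + τ / 2 * ‖z - x‖ ^ 2)
    (xp : EuclideanSpace ℝ (Fin d)) (hxp : xp = (1 - α) • x + α • y) :
    f (P xp) + rh / 2 * ‖P xp - xp‖ ^ 2 ≤
      (f (P x) + rh / 2 * ‖P x - x‖ ^ 2)
      - rh * (τ - rh - β) / (2 * α * (rh + τ - ρ - η)) * ‖xp - x‖ ^ 2
      - α * (2 * rh - ρ - η - β) / (2 * rh * (rh + τ - ρ - η)) * ‖rh • (x - P x)‖ ^ 2 := by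
  obtain ⟨hα0, hα1⟩ := hα
  have hτη : η < τ := (le_max_left _ _).trans_lt hτ
  have hτρ : 2 * ρ < τ := ((le_max_left _ _).trans (le_max_right _ _)).trans_lt hτ
  have hrh0 : 0 < rh := by rw [hrh]; linarith
  have hK : 0 < rh + τ - ρ - η := by rw [hrh]; linarith
  have hinner := le_two_mul_inner_of_isMinOn_model_of_isMinOn_prox
    (strongConvexOn_neg_iff_convexOn_add.2 hfwc) (strongConvexOn_neg_iff_convexOn_add.2 (hmwc x))
    (happrox x) (isMinOn_univ_iff.2 hy) (isMinOn_univ_iff.2 (hP x))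
  have hstep := hP xp (P x)
  rw [show P x - xp = (P x - x) - α • (y - x) by rw [hxp]; module, norm_sub_sq_real (P x - x),
    real_inner_smul_right, norm_smul, mul_pow, Real.norm_eq_abs, sq_abs, real_inner_comm] at hstep
  rw [show xp - x = α • (y - x) by rw [hxp]; module, norm_smul, mul_pow, Real.norm_eq_abs, sq_abs,
    norm_smul, mul_pow, Real.norm_eq_abs, sq_abs, norm_sub_rev x]
  have hscaled := mul_le_mul_of_nonneg_left hinner (by positivity : 0 ≤ α * rh)
  have hslack : 0 ≤ α * rh * (1 - α) * (rh + τ - ρ - η) * ‖y - x‖ ^ 2 := by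
    have : 0 ≤ 1 - α := by linarith
    positivity
  have hcoeff : rh * (τ - rh - β) / (2 * α * (rh + τ - ρ - η)) * (α ^ 2 * ‖y - x‖ ^ 2)
      + α * (2 * rh - ρ - η - β) / (2 * rh * (rh + τ - ρ - η)) * (rh ^ 2 * ‖P x - x‖ ^ 2)
      = α * rh * ((τ - rh - β) * ‖y - x‖ ^ 2 + (2 * rh - ρ - η - β) * ‖P x - x‖ ^ 2)
        / (2 * (rh + τ - ρ - η)) := by
    field_simp
  rw [sub_sub, hcoeff, le_sub_iff_add_le, ← le_sub_iff_add_le', div_le_iff₀ (by positivity)]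
  linear_combination 2 * (rh + τ - ρ - η) * hstep + hscaled + hslack

/-- Sufficient decrease: For a `ρ`-weakly convex `f` with `η`-weakly convex
models `model x` satisfying `|f(y) − model x y| ≤ (β/2)‖y − x‖²`,
`τ > max{η, 2ρ, (4β + ρ + η)/2}`, `ρ̂ = τ/2 + (ρ + η)/4`, `α ∈ (0,1]`, `y` the minimizer of
the model subproblem at `x`, `x⁺ = (1 − α)x + αy`, and `P u` the proximal point defining the
Moreau envelope `F(u) = f(P u) + (ρ̂/2)‖P u − u‖²`, the sufficient decrease inequality holds:
`F(x⁺) ≤ F(x) − (ρ̂(τ − ρ̂ − β)/(2α(ρ̂ + τ − ρ − η)))‖x⁺ − x‖²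
  − (α(2ρ̂ − ρ − η − β)/(2ρ̂(ρ̂ + τ − ρ − η)))‖ρ̂(x − P x)‖²`. -/
theorem model_based_sufficient_decrease {d : ℕ}
    (f : EuclideanSpace ℝ (Fin d) → ℝ)
    (ρ η β : ℝ) (hρ : 0 < ρ) (hη : 0 < η) (hβ : 0 < β)
    (hfwc : ConvexOn ℝ Set.univ (fun z => f z + ρ / 2 * ‖z‖ ^ 2))
    (hf : Continuous f)
    (model : EuclideanSpace ℝ (Fin d) → EuclideanSpace ℝ (Fin d) → ℝ)
    (hmwc : ∀ x, ConvexOn ℝ Set.univ (fun z => model x z + η / 2 * ‖z‖ ^ 2))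
    (hmcont : ∀ x, Continuous (model x))
    (happrox : ∀ x y, |f y - model x y| ≤ β / 2 * ‖y - x‖ ^ 2)
    (τ : ℝ) (hτ : τ > max η (max (2 * ρ) ((4 * β + ρ + η) / 2)))
    (rh : ℝ) (hrh : rh = τ / 2 + (ρ + η) / 4)
    (α : ℝ) (hα : α ∈ Set.Ioc (0 : ℝ) 1)
    (P : EuclideanSpace ℝ (Fin d) → EuclideanSpace ℝ (Fin d))
    (hP : ∀ u z, f (P u) + rh / 2 * ‖P u - u‖ ^ 2 ≤ f z + rh / 2 * ‖z - u‖ ^ 2)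
    (x y : EuclideanSpace ℝ (Fin d))
    (hy : ∀ z, model x y + τ / 2 * ‖y - x‖ ^ 2 ≤ model x z + τ / 2 * ‖z - x‖ ^ 2)
    (xp : EuclideanSpace ℝ (Fin d)) (hxp : xp = (1 - α) • x + α • y) :
    f (P xp) + rh / 2 * ‖P xp - xp‖ ^ 2 ≤
      (f (P x) + rh / 2 * ‖P x - x‖ ^ 2)
      - rh * (τ - rh - β) / (2 * α * (rh + τ - ρ - η)) * ‖xp - x‖ ^ 2
      - α * (2 * rh - ρ - η - β) / (2 * rh * (rh + τ - ρ - η)) * ‖rh • (x - P x)‖ ^ 2 :=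
  model_based_sufficient_decrease_general f ρ η β hρ hη hfwc model hmwc happrox τ hτ rh hrh α hα P
    hP x y hy xp hxp
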